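/- The set of laminations is closed under limits: if a sequence of laminations converges in the Hausdorff metric on chord sets, then no two chords in the limit set cross in their interiors. Specifically, if the limit contained two chords whose subtended arcs overlap in an arc of length ε > 0, then any lamination in the sequence within ε/3 of the limit would contain two crossing chords, a contradiction. -/

import Mathlib

open scoped Real

instance : Fact ((0 : ℝ) < 1) := ⟨one_pos⟩
instance : Fact ((0 : ℝ) < 1) := ⟨one_pos⟩

/-- A chord of the unit disk, given by its (ordered pair of) endpoints on `ℝ/ℤ`.
A degenerate chord has both endpoints equal. -/
abbrev Chord := UnitAddCircle × UnitAddCircle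

/-- The position in `[0,1)` of a point of `ℝ/ℤ`. -/
noncomputable def circPos (x : UnitAddCircle) : ℝ := ((AddCircle.equivIco 1 0) x : ℝ)

/-- `t` lies strictly inside the counterclockwise open arc from `a` to `b`. -/
noncomputable def InOpenArc (a b t : UnitAddCircle) : Prop :=
  0 < circPos (t - a) ∧ circPos (t - a) < circPos (b - a)

/-- Two chords cross (in their interiors): their endpoints strictly interleave on
the circle, and they share no endpoint. -/
noncomputable def ChordCross (c c' : Chord) : Prop :=
  Xor' (InOpenArc c.1 c.2 c'.1) (InOpenArc c.1 c.2 c'.2) ∧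
    c'.1 ≠ c.1 ∧ c'.1 ≠ c.2 ∧ c'.2 ≠ c.1 ∧ c'.2 ≠ c.2

/-- A lamination: a closed set of chords of the unit disk, pairwise non-crossing
except at endpoints, symmetric (chords are unordered), and containing every
degenerate chord (point of the circle). -/
noncomputable def IsLamination (L : Set Chord) : Prop :=
  IsClosed L ∧ (∀ a b : UnitAddCircle, (a, b) ∈ L → (b, a) ∈ L) ∧
    (∀ p : UnitAddCircle, (p, p) ∈ L) ∧
    ∀ c ∈ L, ∀ c' ∈ L, ¬ ChordCross c c'


/-- Endpoint-wise distance between two chords: the minimum over the two pairings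
of the sums of circle distances of paired endpoints. -/
noncomputable def chordDist (c c' : Chord) : ℝ :=
  min (dist c.1 c'.1 + dist c.2 c'.2) (dist c.1 c'.2 + dist c.2 c'.1)

lemma circPos_mem (x : UnitAddCircle) : circPos x ∈ Set.Ico (0:ℝ) 1 := by
  have := (AddCircle.equivIco 1 0 x).2
  simpa [circPos] using this

lemma coe_circPos (x : UnitAddCircle) : ((circPos x : ℝ) : UnitAddCircle) = x :=
  (AddCircle.equivIco 1 0).symm_apply_apply x

lemma circPos_zero : circPos (0 : UnitAddCircle) = 0 := by
  have h : ((0:ℝ) : UnitAddCircle) = 0 := by norm_cast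
  rw [circPos, ← h]
  simp [AddCircle.equivIco, toIcoMod_apply_left]

lemma circPos_inj {x y : UnitAddCircle} (h : circPos x = circPos y) : x = y := by
  rw [← coe_circPos x, ← coe_circPos y, h]

lemma circPos_dist_lt {x y : UnitAddCircle} {δ : ℝ} (h1 : δ ≤ circPos x)
    (h2 : circPos x ≤ 1 - δ) (h3 : dist x y < δ) :
    |circPos y - circPos x| < δ := by
  set c := circPos x with hc
  set d := circPos y with hd
  have hcm := circPos_mem x
  have hdm := circPos_mem y
  have hx : ((c : ℝ) : UnitAddCircle) = x := coe_circPos x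
  have hy : ((d : ℝ) : UnitAddCircle) = y := coe_circPos y
  have hdist : dist x y = |(c - d) - round (c - d)| := by
    rw [dist_eq_norm, ← hx, ← hy]
    rw [← AddCircle.coe_sub]
    exact UnitAddCircle.norm_eq
  rw [hdist] at h3
  rw [abs_lt] at h3
  have hr1 : ((round (c - d) : ℤ) : ℝ) < 1 := by
    have := hdm.1
    linarith [h3.1]
  have hr2 : (-1 : ℝ) < ((round (c - d) : ℤ) : ℝ) := by
    have := hdm.2
    linarith [h3.2]
  have hr0 : round (c - d) = 0 := by
    have a1 : round (c - d) < 1 := by exact_mod_cast hr1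
    have a2 : -1 < round (c - d) := by exact_mod_cast hr2
    omega
  rw [hr0] at h3
  push_cast at h3
  rw [abs_lt]
  constructor <;> linarith [h3.1, h3.2]

lemma cross_stable {a b p q a' b' p' q' : UnitAddCircle} {δ : ℝ} (hδ : 0 < δ)
    (hP0 : 3*δ ≤ circPos (p - a))
    (hPA : circPos (p - a) + 3*δ ≤ circPos (b - a))
    (hAQ : circPos (b - a) + 3*δ ≤ circPos (q - a))
    (hQ1 : circPos (q - a) ≤ 1 - 3*δ)
    (h1 : dist a a' + dist b b' < δ / 2)
    (h2 : dist p p' + dist q q' < δ / 2) :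
    ChordCross (a', b') (p', q') := by
  have n1 := dist_nonneg (x := a) (y := a')
  have n2 := dist_nonneg (x := b) (y := b')
  have n3 := dist_nonneg (x := p) (y := p')
  have n4 := dist_nonneg (x := q) (y := q')
  have dA : dist (b - a) (b' - a') < δ :=
    lt_of_le_of_lt (dist_sub_sub_le _ _ _ _) (by linarith)
  have dP : dist (p - a) (p' - a') < δ :=
    lt_of_le_of_lt (dist_sub_sub_le _ _ _ _) (by linarith)
  have dQ : dist (q - a) (q' - a') < δ :=
    lt_of_le_of_lt (dist_sub_sub_le _ _ _ _) (by linarith)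
  have hA' : |circPos (b' - a') - circPos (b - a)| < δ :=
    circPos_dist_lt (by linarith) (by linarith) dA
  have hP' : |circPos (p' - a') - circPos (p - a)| < δ :=
    circPos_dist_lt (by linarith) (by linarith) dP
  have hQ' : |circPos (q' - a') - circPos (q - a)| < δ :=
    circPos_dist_lt (by linarith) (by linarith) dQ
  rw [abs_lt] at hA' hP' hQ'
  have hP'pos : 0 < circPos (p' - a') := by linarith [hP'.1]
  have hP'A' : circPos (p' - a') < circPos (b' - a') := by linarith [hP'.2, hA'.1]
  have hA'Q' : circPos (b' - a') < circPos (q' - a') := by linarith [hA'.2, hQ'.1]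
  have hQ'pos : 0 < circPos (q' - a') := by linarith
  have hne1 : p' ≠ a' := by
    intro h
    rw [h, sub_self, circPos_zero] at hP'pos
    exact lt_irrefl 0 hP'pos
  have hne2 : p' ≠ b' := by
    intro h
    rw [h] at hP'A'
    exact lt_irrefl _ hP'A'
  have hne3 : q' ≠ a' := by
    intro h
    rw [h, sub_self, circPos_zero] at hQ'pos
    exact lt_irrefl 0 hQ'pos
  have hne4 : q' ≠ b' := by
    intro h
    rw [h] at hA'Q'
    exact lt_irrefl _ hA'Q'
  exact ⟨Or.inl ⟨⟨hP'pos, hP'A'⟩, fun h => absurd h.2 (not_lt.2 hA'Q'.le)⟩,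
    hne1, hne2, hne3, hne4⟩

lemma exists_cross_margin {a b p q : UnitAddCircle} (hP : InOpenArc a b p)
    (hQ : ¬ InOpenArc a b q) (hqa : q ≠ a) (hqb : q ≠ b) :
    ∃ δ > 0, ∀ a' b' p' q' : UnitAddCircle,
      dist a a' + dist b b' < δ → dist p p' + dist q q' < δ →
      ChordCross (a', b') (p', q') := by
  obtain ⟨hP0, hPA⟩ := hP
  have hQpos : 0 < circPos (q - a) := by
    rcases lt_or_eq_of_le (circPos_mem (q - a)).1 with h | h
    · exact h
    · exact absurd (sub_eq_zero.mp (circPos_inj (x := q - a) (y := 0)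
        (by rw [circPos_zero, ← h]))) hqa
  have hAle : circPos (b - a) ≤ circPos (q - a) := by
    by_contra hcon
    push_neg at hcon
    exact hQ ⟨hQpos, hcon⟩
  have hAQ : circPos (b - a) < circPos (q - a) := by
    rcases lt_or_eq_of_le hAle with h | h
    · exact h
    · have hbq : b - a = q - a := circPos_inj h
      have : b = q := by
        have := congrArg (· + a) hbq
        simpa [sub_add_cancel] using this
      exact absurd this.symm hqb
  have hQ1 := (circPos_mem (q - a)).2
  have hmpos : 0 < min (min (circPos (p - a)) (circPos (b - a) - circPos (p - a)))
      (min (circPos (q - a) - circPos (b - a)) (1 - circPos (q - a))) :=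
    lt_min (lt_min (by linarith) (by linarith)) (lt_min (by linarith) (by linarith))
  set m : ℝ := min (min (circPos (p - a)) (circPos (b - a) - circPos (p - a)))
      (min (circPos (q - a) - circPos (b - a)) (1 - circPos (q - a))) with hm
  have hm1 : m ≤ circPos (p - a) := le_trans (min_le_left _ _) (min_le_left _ _)
  have hm2 : m ≤ circPos (b - a) - circPos (p - a) :=
    le_trans (min_le_left _ _) (min_le_right _ _)
  have hm3 : m ≤ circPos (q - a) - circPos (b - a) :=
    le_trans (min_le_right _ _) (min_le_left _ _)
  have hm4 : m ≤ 1 - circPos (q - a) := le_trans (min_le_right _ _) (min_le_right _ _)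
  refine ⟨m / 6, by linarith, fun a' b' p' q' h1 h2 => ?_⟩
  refine cross_stable (a := a) (b := b) (p := p) (q := q) (δ := m / 3)
    (by linarith) (by linarith) (by linarith) (by linarith) (by linarith)
    (by linarith) (by linarith)

lemma approx_in {S : Set Chord} (hsym : ∀ a b : UnitAddCircle, (a, b) ∈ S → (b, a) ∈ S)
    {c d : Chord} (hd : d ∈ S) {ε : ℝ} (h : chordDist c d < ε) :
    ∃ u v : UnitAddCircle, (u, v) ∈ S ∧ dist c.1 u + dist c.2 v < ε := by
  rcases min_lt_iff.mp h with h' | h'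
  · exact ⟨d.1, d.2, by simpa using hd, h'⟩
  · exact ⟨d.2, d.1, hsym d.1 d.2 (by simpa using hd), h'⟩

/-- The set of laminations is closed under limits: if a sequence of
laminations converges in the Hausdorff metric on chord sets to a set `M`, then no
two chords of `M` cross in their interiors. -/
theorem limit_of_laminations_noncrossing (L : ℕ → Set Chord)
    (hL : ∀ n, IsLamination (L n)) (M : Set Chord)
    (hconv : ∀ ε : ℝ, 0 < ε → ∃ N : ℕ, ∀ n ≥ N,
      (∀ c ∈ L n, ∃ c' ∈ M, chordDist c c' < ε) ∧
      (∀ c ∈ M, ∃ c' ∈ L n, chordDist c c' < ε)) :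
    ∀ c ∈ M, ∀ c' ∈ M, ¬ ChordCross c c' := by
  intro c hc c' hc' hcross
  obtain ⟨hx, hpa, hpb, hqa, hqb⟩ := hcross
  rcases hx with ⟨hP, hQn⟩ | ⟨hQ, hPn⟩
  · obtain ⟨δ, hδ, key⟩ := exists_cross_margin hP hQn hqa hqb
    obtain ⟨N, hN⟩ := hconv δ hδ
    obtain ⟨-, happ⟩ := hN N le_rfl
    obtain ⟨d, hd, hdd⟩ := happ c hc
    obtain ⟨a', b', hab, h1⟩ := approx_in (hL N).2.1 hd hdd
    obtain ⟨e, he, hee⟩ := happ c' hc'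
    obtain ⟨p', q', hpq, h2⟩ := approx_in (hL N).2.1 he hee
    exact (hL N).2.2.2 _ hab _ hpq (key a' b' p' q' h1 h2)
  · obtain ⟨δ, hδ, key⟩ := exists_cross_margin hQ hPn hpa hpb
    obtain ⟨N, hN⟩ := hconv δ hδ
    obtain ⟨-, happ⟩ := hN N le_rfl
    obtain ⟨d, hd, hdd⟩ := happ c hc
    obtain ⟨a', b', hab, h1⟩ := approx_in (hL N).2.1 hd hdd
    obtain ⟨e, he, hee⟩ := happ c' hc'
    obtain ⟨p', q', hpq, h2⟩ := approx_in (hL N).2.1 he hee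
    exact (hL N).2.2.2 _ hab _ ((hL N).2.1 p' q' hpq)
      (key a' b' q' p' h1 (by linarith))
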